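/- arXiv:2602.06720 — 5 statements merged into one kernel-verified Lean document; each statement's English description precedes it below -/
import Mathlib

section
/- If f : X → Y is a uniformly finite-to-one coarse map between uniformly locally finite metric spaces, then the pushforward f_* : C^{uf}_n(X;ℤ) → C^{uf}_n(Y;ℤ), defined by f_*(g)(ȳ) = Σ_{f(x̄)=ȳ} g(x̄) (sum over x̄ ∈ X^{n+1} with coordinatewise image ȳ), is a well-defined group homomorphism commuting with the boundary operators. -/
noncomputable section
open scoped Classical

lemma comp_insertNth_aux {X Y : Type*} (f : X → Y) {n : ℕ} (i : Fin (n + 1)) (y : X)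
    (x : Fin n → X) : f ∘ i.insertNth y x = i.insertNth (f y) (f ∘ x) := by
  funext j
  refine Fin.succAboveCases i ?_ (fun k => ?_) j <;> simp

lemma tuple_preimage_aux {X Y : Type*} {f : X → Y} {N : ℕ}
    (hN : ∀ y : Y, (f ⁻¹' {y}).Finite ∧ (f ⁻¹' {y}).ncard ≤ N) (m : ℕ) (ybar : Fin m → Y) :
    {x : Fin m → X | f ∘ x = ybar}.Finite ∧ {x : Fin m → X | f ∘ x = ybar}.ncard ≤ N ^ m := by
  classical
  set Ff : Fin m → Finset X := fun j => (hN (ybar j)).1.toFinset with hFf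
  have hsub : {x : Fin m → X | f ∘ x = ybar} ⊆ ↑(Fintype.piFinset Ff) := by
    intro x hx
    simp only [Finset.coe_sort_coe, Finset.mem_coe, Fintype.mem_piFinset, hFf,
      Set.Finite.mem_toFinset, Set.mem_preimage, Set.mem_singleton_iff]
    exact fun j => congrFun hx j
  have hfin : {x : Fin m → X | f ∘ x = ybar}.Finite :=
    Set.Finite.subset (Fintype.piFinset Ff).finite_toSet hsub
  refine ⟨hfin, ?_⟩
  calc {x : Fin m → X | f ∘ x = ybar}.ncard
      ≤ (↑(Fintype.piFinset Ff) : Set (Fin m → X)).ncard :=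
        Set.ncard_le_ncard hsub (Fintype.piFinset Ff).finite_toSet
    _ = (Fintype.piFinset Ff).card := Set.ncard_coe_finset _
    _ = ∏ j : Fin m, (Ff j).card := Fintype.card_piFinset Ff
    _ ≤ ∏ _j : Fin m, N := by
        refine Finset.prod_le_prod' fun j _ => ?_
        have := (hN (ybar j)).2
        rwa [Set.ncard_eq_toFinset_card _ (hN (ybar j)).1] at this
    _ = N ^ m := by simp

def UniformlyLocallyFinite (X : Type*) [MetricSpace X] : Prop :=
  ∀ R : ℝ, ∃ N : ℕ, ∀ x : X,
    (Metric.closedBall x R).Finite ∧ (Metric.closedBall x R).ncard ≤ N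

def IsCoarse {X Y : Type*} [MetricSpace X] [MetricSpace Y] (f : X → Y) : Prop :=
  ∀ R : ℝ, ∃ S : ℝ, ∀ x x' : X, dist x x' ≤ R → dist (f x) (f x') ≤ S

def Close {X Y : Type*} [MetricSpace Y] (f g : X → Y) : Prop :=
  ∃ C : ℝ, ∀ x : X, dist (f x) (g x) ≤ C

def UniformlyFiniteToOne {X Y : Type*} (f : X → Y) : Prop :=
  ∃ N : ℕ, ∀ y : Y, (f ⁻¹' {y}).Finite ∧ (f ⁻¹' {y}).ncard ≤ N

def Bdd {α : Type*} (f : α → ℤ) : Prop := ∃ C : ℤ, ∀ a, |f a| ≤ C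

def CtrlProp {X : Type*} [MetricSpace X] {m : ℕ} (f : (Fin m → X) → ℤ) : Prop :=
  ∃ R : ℝ, ∀ x : Fin m → X, f x ≠ 0 → ∀ i j, dist (x i) (x j) ≤ R

/-- A uniformly finite chain: bounded and of controlled propagation. -/
def UFChain {X : Type*} [MetricSpace X] {m : ℕ} (f : (Fin m → X) → ℤ) : Prop :=
  Bdd f ∧ CtrlProp f

/-- The uniformly finite boundary operator. -/
noncomputable def bd {X : Type*} {n : ℕ} (f : (Fin (n + 2) → X) → ℤ) :
    (Fin (n + 1) → X) → ℤ :=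
  fun x => ∑ i : Fin (n + 2), (-1 : ℤ) ^ (i : ℕ) * ∑ᶠ y : X, f (Fin.insertNth i y x)

/-- The pushforward of chains along a map. -/
noncomputable def push {X Y : Type*} {m : ℕ} (f : X → Y)
    (g : (Fin m → X) → ℤ) : (Fin m → Y) → ℤ :=
  fun ybar => ∑ᶠ xbar ∈ {x : Fin m → X | f ∘ x = ybar}, g xbar

set_option maxHeartbeats 2000000 in
/-- The pushforward along a uniformly finite-to-one coarse map is a well-defined
group homomorphism on uniformly finite chains commuting with the boundary. -/
theorem stmt8 {X Y : Type*} [MetricSpace X] [MetricSpace Y]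
    (hX : UniformlyLocallyFinite X) (hY : UniformlyLocallyFinite Y)
    (f : X → Y) (hcoarse : IsCoarse f) (hfin : UniformlyFiniteToOne f) (n : ℕ) :
    (∀ g : (Fin (n + 1) → X) → ℤ, UFChain g → ∀ ybar : Fin (n + 1) → Y,
      {x : Fin (n + 1) → X | f ∘ x = ybar ∧ g x ≠ 0}.Finite) ∧
    (∀ g : (Fin (n + 1) → X) → ℤ, UFChain g → UFChain (push f g)) ∧
    (∀ g₁ g₂ : (Fin (n + 1) → X) → ℤ, UFChain g₁ → UFChain g₂ →
      push f (g₁ + g₂) = push f g₁ + push f g₂) ∧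
    (∀ g : (Fin (n + 2) → X) → ℤ, UFChain g → push f (bd g) = bd (push f g)) := by
  classical
  obtain ⟨N, hN⟩ := hfin
  have key := fun (m : ℕ) (ybar : Fin m → Y) => tuple_preimage_aux hN m ybar
  -- existence of a nonzero element when push is nonzero
  have hex : ∀ (m : ℕ) (g : (Fin m → X) → ℤ) (ybar : Fin m → Y), push f g ybar ≠ 0 →
      ∃ x : Fin m → X, f ∘ x = ybar ∧ g x ≠ 0 := by
    intro m g ybar hne
    by_contra h
    push_neg at h
    exact hne (finsum_mem_of_eqOn_zero fun x hx => h x hx)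
  refine ⟨?_, ?_, ?_, ?_⟩
  · intro g _ ybar
    exact (key (n + 1) ybar).1.subset fun x hx => hx.1
  · rintro g ⟨⟨C, hC⟩, ⟨R, hR⟩⟩
    constructor
    · refine ⟨(N : ℤ) ^ (n + 1) * max C 0, fun ybar => ?_⟩
      have hP := (key (n + 1) ybar).1
      rw [push, finsum_mem_eq_finite_toFinset_sum _ hP]
      calc |∑ x ∈ hP.toFinset, g x| ≤ ∑ x ∈ hP.toFinset, |g x| :=
            Finset.abs_sum_le_sum_abs _ _
        _ ≤ hP.toFinset.card • max C 0 :=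
            Finset.sum_le_card_nsmul _ _ _ fun x _ => le_trans (hC x) (le_max_left _ _)
        _ = (hP.toFinset.card : ℤ) * max C 0 := by simp [nsmul_eq_mul]
        _ ≤ (N : ℤ) ^ (n + 1) * max C 0 := by
            refine mul_le_mul_of_nonneg_right ?_ (le_max_right _ _)
            have h2 := (key (n + 1) ybar).2
            rw [Set.ncard_eq_toFinset_card _ hP] at h2
            exact_mod_cast h2.trans_eq (by push_cast; ring)
    · obtain ⟨S, hS⟩ := hcoarse R
      refine ⟨S, fun ybar hne i j => ?_⟩
      obtain ⟨x, hfx, hgx⟩ := hex (n + 1) g ybar hne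
      have hi : ybar i = f (x i) := (congrFun hfx i).symm
      have hj : ybar j = f (x j) := (congrFun hfx j).symm
      rw [hi, hj]
      exact hS _ _ (hR x hgx i j)
  · intro g₁ g₂ _ _
    funext ybar
    exact finsum_mem_add_distrib (key (n + 1) ybar).1
  · rintro g ⟨⟨C, hC⟩, ⟨R, hR⟩⟩
    funext ybar
    obtain ⟨NX, hNX⟩ := hX R
    have hP := (key (n + 1) ybar).1
    set Pf := hP.toFinset with hPf
    have hmemPf : ∀ x : Fin (n + 1) → X, x ∈ Pf ↔ f ∘ x = ybar := fun x => by
      simp [hPf, Set.Finite.mem_toFinset]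
    set Bset : Set X := ⋃ p ∈ f ⁻¹' {ybar 0}, Metric.closedBall p R with hBdef
    have hB : Bset.Finite := Set.Finite.biUnion (hN (ybar 0)).1 fun p _ => (hNX p).1
    set Bf := hB.toFinset with hBf
    have hZ : (f '' Bset).Finite := hB.image f
    set Zf := hZ.toFinset with hZf
    have main : ∀ i : Fin (n + 2),
        ∑ x ∈ Pf, ∑ᶠ y : X, g (i.insertNth y x) =
          ∑ᶠ z : Y, push f g (i.insertNth z ybar) := by
      intro i
      set E : ((Fin (n + 1) → X) × X) → (Fin (n + 2) → X) :=
        fun p => i.insertNth p.2 p.1 with hE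
      set T : Finset (Fin (n + 2) → X) := (Pf ×ˢ Bf).image E with hT
      set Q : Y → Finset (Fin (n + 2) → X) :=
        fun z => (key (n + 2) (i.insertNth z ybar)).1.toFinset with hQ
      have hmemQ : ∀ (z : Y) (x' : Fin (n + 2) → X),
          x' ∈ Q z ↔ f ∘ x' = i.insertNth z ybar := fun z x' => by
        simp [hQ, Set.Finite.mem_toFinset]
      have hBmem : ∀ (x' : Fin (n + 2) → X) (z : Y), g x' ≠ 0 →
          f ∘ x' = i.insertNth z ybar → x' i ∈ Bset := by
        intro x' z hgx hfx
        have h0 : x' (i.succAbove 0) ∈ f ⁻¹' {ybar 0} := by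
          have := congrFun hfx (i.succAbove 0)
          simpa using this
        exact Set.mem_biUnion h0 (Metric.mem_closedBall.2 (hR x' hgx i (i.succAbove 0)))
      have L1 : ∀ x ∈ Pf, ∑ᶠ y : X, g (i.insertNth y x) = ∑ y ∈ Bf, g (i.insertNth y x) := by
        intro x hx
        refine finsum_eq_sum_of_support_subset _ ?_
        intro y hy
        have hgx : g (i.insertNth y x) ≠ 0 := hy
        have hfx : f ∘ i.insertNth y x = i.insertNth (f y) ybar := by
          rw [comp_insertNth_aux]
          rw [(hmemPf x).1 hx]
        have hmem := hBmem _ _ hgx hfx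
        rw [Fin.insertNth_apply_same] at hmem
        simpa [hBf, Set.Finite.mem_toFinset] using hmem
      have hinjE : ∀ p ∈ Pf ×ˢ Bf, ∀ q ∈ Pf ×ˢ Bf, E p = E q → p = q := by
        intro p _ q _ h
        have h2 : p.2 = q.2 := by
          have := congrFun h i
          simpa [hE] using this
        have h1 : p.1 = q.1 := by
          have := congrArg i.removeNth h
          simpa [hE] using this
        exact Prod.ext h1 h2
      have R2 : ∀ z : Y, push f g (i.insertNth z ybar) = ∑ x' ∈ Q z, g x' := fun z =>
        finsum_mem_eq_finite_toFinset_sum _ (key (n + 2) (i.insertNth z ybar)).1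
      have hTsub : T ⊆ Zf.biUnion Q := by
        intro x' hx'
        obtain ⟨p, hp, rfl⟩ := Finset.mem_image.1 hx'
        obtain ⟨hp1, hp2⟩ := Finset.mem_product.1 hp
        have hp2' : p.2 ∈ Bset := by simpa [hBf, Set.Finite.mem_toFinset] using hp2
        refine Finset.mem_biUnion.2 ⟨f p.2, ?_, ?_⟩
        · simp only [hZf, Set.Finite.mem_toFinset]
          exact Set.mem_image_of_mem f hp2'
        · rw [hmemQ, hE]
          rw [comp_insertNth_aux, (hmemPf p.1).1 hp1]
      have hvan : ∀ x' ∈ Zf.biUnion Q, x' ∉ T → g x' = 0 := by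
        intro x' hx' hnT
        by_contra hgx
        obtain ⟨z, _, hxQ⟩ := Finset.mem_biUnion.1 hx'
        have hfx : f ∘ x' = i.insertNth z ybar := (hmemQ z x').1 hxQ
        apply hnT
        have hx1 : i.removeNth x' ∈ Pf := by
          rw [hmemPf]
          funext j
          have := congrFun hfx (i.succAbove j)
          simpa [Fin.removeNth] using this
        have hx2 : x' i ∈ Bf := by
          simpa [hBf, Set.Finite.mem_toFinset] using hBmem x' z hgx hfx
        refine Finset.mem_image.2 ⟨(i.removeNth x', x' i), Finset.mem_product.2 ⟨hx1, hx2⟩, ?_⟩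
        simp [hE, Fin.insertNth_self_removeNth]
      have hdisj : (↑Zf : Set Y).PairwiseDisjoint Q := by
        intro z _ z' _ hzz'
        refine Finset.disjoint_left.2 fun x' h1 h2 => hzz' ?_
        have e1 := (hmemQ z x').1 h1
        have e2 := (hmemQ z' x').1 h2
        have := congrFun (e1.symm.trans e2) i
        simpa using this
      have hsupZ : Function.support (fun z => push f g (i.insertNth z ybar)) ⊆ ↑Zf := by
        intro z hz
        obtain ⟨x', hfx, hgx⟩ := hex (n + 2) g (i.insertNth z ybar) hz
        have hmem := hBmem x' z hgx hfx
        have hzz : f (x' i) = z := by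
          have := congrFun hfx i
          simpa using this
        simp only [hZf, Finset.coe_sort_coe, Set.Finite.coe_toFinset]
        exact ⟨x' i, hmem, hzz⟩
      calc ∑ x ∈ Pf, ∑ᶠ y : X, g (i.insertNth y x)
          = ∑ x ∈ Pf, ∑ y ∈ Bf, g (i.insertNth y x) := Finset.sum_congr rfl L1
        _ = ∑ p ∈ Pf ×ˢ Bf, g (E p) := by
            simp only [hE]
            exact (Finset.sum_product Pf Bf fun p => g (i.insertNth p.2 p.1)).symm
        _ = ∑ x' ∈ T, g x' := (Finset.sum_image hinjE).symm
        _ = ∑ x' ∈ Zf.biUnion Q, g x' := Finset.sum_subset hTsub hvan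
        _ = ∑ z ∈ Zf, ∑ x' ∈ Q z, g x' := Finset.sum_biUnion hdisj
        _ = ∑ z ∈ Zf, push f g (i.insertNth z ybar) :=
            Finset.sum_congr rfl fun z _ => (R2 z).symm
        _ = ∑ᶠ z : Y, push f g (i.insertNth z ybar) :=
            (finsum_eq_sum_of_support_subset _ hsupZ).symm
    calc push f (bd g) ybar
        = ∑ x ∈ Pf, bd g x := finsum_mem_eq_finite_toFinset_sum _ hP
      _ = ∑ x ∈ Pf, ∑ i : Fin (n + 2), (-1 : ℤ) ^ (i : ℕ) * ∑ᶠ y : X, g (i.insertNth y x) :=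
          rfl
      _ = ∑ i : Fin (n + 2), ∑ x ∈ Pf, (-1 : ℤ) ^ (i : ℕ) * ∑ᶠ y : X, g (i.insertNth y x) :=
          Finset.sum_comm
      _ = ∑ i : Fin (n + 2), (-1 : ℤ) ^ (i : ℕ) * ∑ x ∈ Pf, ∑ᶠ y : X, g (i.insertNth y x) := by
          simp [Finset.mul_sum]
      _ = ∑ i : Fin (n + 2), (-1 : ℤ) ^ (i : ℕ) * ∑ᶠ z : Y, push f g (i.insertNth z ybar) := by
          refine Finset.sum_congr rfl fun i _ => ?_
          rw [main i]
      _ = bd (push f g) ybar := rfl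
end
end

section
/- If f, g : X → Y are close uniformly finite-to-one coarse maps between uniformly locally finite metric spaces, then the induced maps on 0-th uniformly finite homology coincide: H₀^{uf}(f) = H₀^{uf}(g). -/
noncomputable section
open scoped Classical

/-! ### Auxiliary lemmas -/

lemma eval0_inj {X : Type*} : Function.Injective (fun xb : Fin 1 → X => xb 0) := by
  intro a b hab
  funext i
  have : i = 0 := Subsingleton.elim _ _
  rw [this]; exact hab

lemma fin_of_pre {X Y : Type*} {p : X → Y} {y : Y} (hp : (p ⁻¹' {y}).Finite) :
    {xb : Fin 1 → X | p (xb 0) = y}.Finite := by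
  have : {xb : Fin 1 → X | p (xb 0) = y} = (fun xb : Fin 1 → X => xb 0) ⁻¹' (p ⁻¹' {y}) := by
    ext xb; simp [Set.mem_preimage]
  rw [this]
  exact Set.Finite.preimage (Set.injOn_of_injective eval0_inj) hp

lemma partition {X Y : Type*} (p q : X → Y) (z0 : Y)
    (hfin : {xb : Fin 1 → X | p (xb 0) = z0}.Finite) (h : (Fin 1 → X) → ℤ) :
    ∑ᶠ y : Y, ∑ᶠ xb ∈ {xb : Fin 1 → X | p (xb 0) = z0 ∧ q (xb 0) = y}, h xb
      = ∑ᶠ xb ∈ {xb : Fin 1 → X | p (xb 0) = z0}, h xb := by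
  classical
  set t := hfin.toFinset with ht
  have hset : ∀ y : Y, {xb : Fin 1 → X | p (xb 0) = z0 ∧ q (xb 0) = y}
      = ↑(t.filter (fun xb => q (xb 0) = y)) := by
    intro y; ext xb; simp [ht, hfin.mem_toFinset, and_comm]
  have hinner : ∀ y : Y, ∑ᶠ xb ∈ {xb : Fin 1 → X | p (xb 0) = z0 ∧ q (xb 0) = y}, h xb
      = ∑ xb ∈ t.filter (fun xb => q (xb 0) = y), h xb := by
    intro y; rw [hset y, finsum_mem_coe_finset]
  rw [finsum_congr hinner]
  have hsupp : (Function.support fun y => ∑ xb ∈ t.filter (fun xb => q (xb 0) = y), h xb)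
      ⊆ ↑(t.image (fun xb => q (xb 0))) := by
    intro y hy
    simp only [Function.mem_support] at hy
    by_contra hc
    apply hy
    apply Finset.sum_eq_zero
    intro x hx
    exfalso
    simp only [Finset.mem_filter] at hx
    exact hc (by simp only [Finset.coe_image, Set.mem_image, Finset.mem_coe]; exact ⟨x, hx.1, hx.2⟩)
  rw [finsum_eq_finset_sum_of_support_subset _ hsupp]
  have hfib := Finset.sum_fiberwise_of_maps_to (t := t.image (fun xb => q (xb 0)))
    (g := fun xb : Fin 1 → X => q (xb 0))
    (fun x hx => Finset.mem_image_of_mem _ hx) h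
  rw [hfib, ← finsum_mem_coe_finset]
  congr 1
  simp [ht, hfin.coe_toFinset]

/-- The prism chain. -/
noncomputable def myc {X Y : Type*} (f g : X → Y) (h : (Fin 1 → X) → ℤ) :
    (Fin 2 → Y) → ℤ :=
  fun yb => ∑ᶠ xb ∈ {xb : Fin 1 → X | g (xb 0) = yb 0 ∧ f (xb 0) = yb 1}, h xb

lemma ins0_0 {Y : Type*} (y : Y) (z : Fin 1 → Y) :
    (Fin.insertNth (0:Fin 2) y z : Fin 2 → Y) 0 = y := by simp
lemma ins0_1 {Y : Type*} (y : Y) (z : Fin 1 → Y) :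
    (Fin.insertNth (0:Fin 2) y z : Fin 2 → Y) 1 = z 0 := by
  have : (1 : Fin 2) = (0 : Fin 2).succAbove 0 := by decide
  rw [this, Fin.insertNth_apply_succAbove]
lemma ins1_0 {Y : Type*} (y : Y) (z : Fin 1 → Y) :
    (Fin.insertNth (1:Fin 2) y z : Fin 2 → Y) 0 = z 0 := by
  have : (0 : Fin 2) = (1 : Fin 2).succAbove 0 := by decide
  rw [this, Fin.insertNth_apply_succAbove]
lemma ins1_1 {Y : Type*} (y : Y) (z : Fin 1 → Y) :
    (Fin.insertNth (1:Fin 2) y z : Fin 2 → Y) 1 = y := by simp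

/-- Close uniformly finite-to-one coarse maps induce the same map on 0-th
uniformly finite homology: for every 0-chain `h`, the pushforwards along the
two maps differ by a boundary. -/
theorem stmt9 {X Y : Type*} [MetricSpace X] [MetricSpace Y]
    (hX : UniformlyLocallyFinite X) (hY : UniformlyLocallyFinite Y)
    (f g : X → Y) (hf : IsCoarse f) (hg : IsCoarse g)
    (hf' : UniformlyFiniteToOne f) (hg' : UniformlyFiniteToOne g)
    (hclose : Close f g)
    (h : (Fin 1 → X) → ℤ) (hh : UFChain h) :
    ∃ c : (Fin 2 → Y) → ℤ, UFChain c ∧ bd c = push f h - push g h := by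
  classical
  obtain ⟨C, hC⟩ := hh.1
  obtain ⟨Nf, hNf⟩ := hf'
  obtain ⟨Ng, hNg⟩ := hg'
  obtain ⟨C0, hC0⟩ := hclose
  refine ⟨myc f g h, ⟨?_, ?_⟩, ?_⟩
  · -- bounded
    refine ⟨(Ng : ℤ) * max C 0, fun yb => ?_⟩
    have hsub : {xb : Fin 1 → X | g (xb 0) = yb 0 ∧ f (xb 0) = yb 1}
        ⊆ {xb : Fin 1 → X | g (xb 0) = yb 0} := fun xb hxb => hxb.1
    have hfin : {xb : Fin 1 → X | g (xb 0) = yb 0 ∧ f (xb 0) = yb 1}.Finite :=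
      (fin_of_pre (hNg (yb 0)).1).subset hsub
    have hcard : hfin.toFinset.card ≤ Ng := by
      rw [← Set.ncard_coe_finset, hfin.coe_toFinset]
      calc {xb : Fin 1 → X | g (xb 0) = yb 0 ∧ f (xb 0) = yb 1}.ncard
          ≤ {xb : Fin 1 → X | g (xb 0) = yb 0}.ncard :=
            Set.ncard_le_ncard hsub (fin_of_pre (hNg (yb 0)).1)
        _ ≤ (g ⁻¹' {yb 0}).ncard :=
            Set.ncard_le_ncard_of_injOn (fun xb => xb 0) (fun xb hxb => hxb)
              (Set.injOn_of_injective eval0_inj) (hNg (yb 0)).1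
        _ ≤ Ng := (hNg (yb 0)).2
    have heq : myc f g h yb = ∑ xb ∈ hfin.toFinset, h xb := by
      rw [myc, finsum_mem_eq_finite_toFinset_sum _ hfin]
    rw [heq]
    calc |∑ xb ∈ hfin.toFinset, h xb| ≤ ∑ xb ∈ hfin.toFinset, |h xb| :=
          Finset.abs_sum_le_sum_abs _ _
      _ ≤ hfin.toFinset.card • max C 0 :=
          Finset.sum_le_card_nsmul _ _ _ (fun x _ => le_max_of_le_left (hC x))
      _ = (hfin.toFinset.card : ℤ) * max C 0 := by simp [nsmul_eq_mul]
      _ ≤ (Ng : ℤ) * max C 0 := by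
          apply mul_le_mul_of_nonneg_right _ (le_max_right _ _)
          exact_mod_cast hcard
  · -- controlled propagation
    refine ⟨max C0 0, fun yb hyb i j => ?_⟩
    have : ∃ xb : Fin 1 → X, g (xb 0) = yb 0 ∧ f (xb 0) = yb 1 := by
      by_contra hc
      push_neg at hc
      apply hyb
      have : {xb : Fin 1 → X | g (xb 0) = yb 0 ∧ f (xb 0) = yb 1} = ∅ := by
        ext xb; simp only [Set.mem_setOf_eq, Set.mem_empty_iff_false, iff_false]
        intro hx; exact hc xb hx.1 hx.2
      rw [myc, this, finsum_mem_empty]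
    obtain ⟨xb, hg0, hf1⟩ := this
    have hd : dist (yb 0) (yb 1) ≤ max C0 0 := by
      rw [← hg0, ← hf1, dist_comm]
      exact le_max_of_le_left (hC0 (xb 0))
    have hd' : dist (yb 1) (yb 0) ≤ max C0 0 := by rwa [dist_comm]
    fin_cases i <;> fin_cases j <;>
      simp_all [dist_self, le_max_iff, le_refl, or_true]
  · -- boundary computation
    funext z
    have key0 : ∑ᶠ y : Y, myc f g h (Fin.insertNth (0:Fin 2) y z) = push f h z := by
      have hc0 : ∀ y : Y, myc f g h (Fin.insertNth (0:Fin 2) y z)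
          = ∑ᶠ xb ∈ {xb : Fin 1 → X | f (xb 0) = z 0 ∧ g (xb 0) = y}, h xb := by
        intro y
        simp only [myc, ins0_0, ins0_1]
        have hset : {xb : Fin 1 → X | g (xb 0) = y ∧ f (xb 0) = z 0}
            = {xb : Fin 1 → X | f (xb 0) = z 0 ∧ g (xb 0) = y} := by
          ext xb; exact and_comm
        rw [hset]
      rw [finsum_congr hc0, partition f g (z 0) (fin_of_pre (hNf (z 0)).1) h, push]
      congr 1
      ext xb
      simp only [Set.mem_setOf_eq, funext_iff, Fin.forall_fin_one, Function.comp_apply]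
    have key1 : ∑ᶠ y : Y, myc f g h (Fin.insertNth (1:Fin 2) y z) = push g h z := by
      have hc1 : ∀ y : Y, myc f g h (Fin.insertNth (1:Fin 2) y z)
          = ∑ᶠ xb ∈ {xb : Fin 1 → X | g (xb 0) = z 0 ∧ f (xb 0) = y}, h xb := by
        intro y
        simp only [myc, ins1_0, ins1_1]
      rw [finsum_congr hc1, partition g f (z 0) (fin_of_pre (hNg (z 0)).1) h, push]
      congr 1
      ext xb
      simp only [Set.mem_setOf_eq, funext_iff, Fin.forall_fin_one, Function.comp_apply]
    rw [bd, Fin.sum_univ_two]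
    simp only [Fin.val_zero, Fin.val_one, pow_zero, pow_one, one_mul, neg_one_mul]
    rw [key0, key1]
    simp [sub_eq_add_neg]
end
end

section
/- Every entourage E ⊆ X × X of a uniformly locally finite metric space decomposes as a finite disjoint union of graphs of partial translations: there exist partial translations t₁,…,t_n with pairwise disjoint graphs such that E = ⊔_{i=1}^n Graph(t_i). -/
noncomputable section
open scoped Classical

/-- A partial translation on a metric space. -/
structure PartialTranslation (X : Type*) [MetricSpace X] where
  dom : Set X
  toFun : X → X
  injOn : Set.InjOn toFun dom
  bddMove : ∃ C : ℝ, ∀ x ∈ dom, dist x (toFun x) ≤ C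

/-- The graph `{(t x, x) : x ∈ dom t} ⊆ X × X` of a partial translation. -/
def PartialTranslation.graph {X : Type*} [MetricSpace X]
    (t : PartialTranslation X) : Set (X × X) :=
  (fun x => (t.toFun x, x)) '' t.dom

lemma exists_injOn_fin {X : Type*} (S : Set X) (N : ℕ) (hf : S.Finite)
    (hc : S.ncard ≤ N) : ∃ g : X → Fin (N + 1), Set.InjOn g S := by
  haveI := hf.fintype
  have hcard : Fintype.card S ≤ Fintype.card (Fin (N + 1)) := by
    rw [← Nat.card_eq_fintype_card, Nat.card_coe_set_eq, Fintype.card_fin]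
    omega
  obtain ⟨e⟩ := Function.Embedding.nonempty_of_card_le hcard
  refine ⟨fun x => if h : x ∈ S then e ⟨x, h⟩ else 0, ?_⟩
  intro x hx y hy hxy
  simp only [dif_pos hx, dif_pos hy] at hxy
  exact Subtype.ext_iff.mp (e.injective hxy)

/-- Every entourage decomposes as a finite disjoint union of graphs of partial
translations. -/
theorem stmt11 {X : Type*} [MetricSpace X] (hX : UniformlyLocallyFinite X)
    (E : Set (X × X)) (hE : ∃ C : ℝ, ∀ p ∈ E, dist p.1 p.2 ≤ C) :
    ∃ (n : ℕ) (t : Fin n → PartialTranslation X),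
      (∀ i j : Fin n, i ≠ j → Disjoint (t i).graph (t j).graph) ∧
      E = ⋃ i : Fin n, (t i).graph := by
  obtain ⟨C, hC⟩ := hE
  obtain ⟨N, hN⟩ := hX C
  set S : X → Set X := fun x => {y | (y, x) ∈ E} with hSdef
  set T : X → Set X := fun y => {x | (y, x) ∈ E} with hTdef
  have hSfin : ∀ x, (S x).Finite ∧ (S x).ncard ≤ N := by
    intro x
    have hsub : S x ⊆ Metric.closedBall x C := fun y hy => by
      simpa [Metric.mem_closedBall] using hC (y, x) hy
    exact ⟨(hN x).1.subset hsub,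
      le_trans (Set.ncard_le_ncard hsub (hN x).1) (hN x).2⟩
  have hTfin : ∀ y, (T y).Finite ∧ (T y).ncard ≤ N := by
    intro y
    have hsub : T y ⊆ Metric.closedBall y C := fun x hx => by
      simpa [Metric.mem_closedBall, dist_comm] using hC (y, x) hx
    exact ⟨(hN y).1.subset hsub,
      le_trans (Set.ncard_le_ncard hsub (hN y).1) (hN y).2⟩
  choose a ha using fun x => exists_injOn_fin (S x) N (hSfin x).1 (hSfin x).2
  choose b hb using fun y => exists_injOn_fin (T y) N (hTfin y).1 (hTfin y).2
  set P : Fin (N + 1) → Fin (N + 1) → X → Prop :=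
    fun i j x => ∃ y, (y, x) ∈ E ∧ a x y = i ∧ b y x = j with hPdef
  set t0 : Fin (N + 1) → Fin (N + 1) → PartialTranslation X := fun i j =>
    { dom := {x | P i j x}
      toFun := fun x => if h : P i j x then h.choose else x
      injOn := by
        intro x1 h1 x2 h2 heq
        simp only [Set.mem_setOf_eq] at h1 h2
        dsimp only at heq
        rw [dif_pos h1, dif_pos h2] at heq
        obtain ⟨hE1, ha1, hb1⟩ := h1.choose_spec
        obtain ⟨hE2, ha2, hb2⟩ := h2.choose_spec
        rw [heq] at hE1 hb1
        exact hb h2.choose hE1 hE2 (hb1.trans hb2.symm)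
      bddMove := by
        refine ⟨C, fun x hx => ?_⟩
        simp only [Set.mem_setOf_eq] at hx
        rw [dif_pos hx]
        obtain ⟨hE1, -, -⟩ := hx.choose_spec
        simpa [dist_comm] using hC (hx.choose, x) hE1 } with ht0
  have hgraph : ∀ i j, (t0 i j).graph =
      {p : X × X | p ∈ E ∧ a p.2 p.1 = i ∧ b p.1 p.2 = j} := by
    intro i j
    ext ⟨y, x⟩
    constructor
    · rintro ⟨x', hx', heq⟩
      simp only [Set.mem_setOf_eq, ht0] at hx' heq ⊢
      obtain ⟨rfl, rfl⟩ : (if h : P i j x' then h.choose else x') = y ∧ x' = x := by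
        exact ⟨(Prod.mk.injEq _ _ _ _).mp heq |>.1, (Prod.mk.injEq _ _ _ _).mp heq |>.2⟩
      rw [dif_pos hx']
      obtain ⟨hE1, ha1, hb1⟩ := hx'.choose_spec
      exact ⟨hE1, ha1, hb1⟩
    · rintro ⟨hpE, hai, hbj⟩
      have hx : P i j x := ⟨y, hpE, hai, hbj⟩
      refine ⟨x, hx, ?_⟩
      simp only [ht0]
      rw [dif_pos hx]
      obtain ⟨hE1, ha1, -⟩ := hx.choose_spec
      have : hx.choose = y := ha x hE1 hpE (ha1.trans hai.symm)
      rw [this]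
  refine ⟨(N + 1) * (N + 1),
    fun k => t0 (finProdFinEquiv.symm k).1 (finProdFinEquiv.symm k).2, ?_, ?_⟩
  · intro k1 k2 hne
    rw [Set.disjoint_left]
    intro p hp1 hp2
    rw [hgraph] at hp1 hp2
    apply hne
    have h1 : (finProdFinEquiv.symm k1) = (finProdFinEquiv.symm k2) := by
      ext
      · rw [← hp1.2.1, hp2.2.1]
      · rw [← hp1.2.2, hp2.2.2]
    exact finProdFinEquiv.symm.injective h1
  · ext p
    constructor
    · intro hp
      refine Set.mem_iUnion.mpr ⟨finProdFinEquiv (a p.2 p.1, b p.1 p.2), ?_⟩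
      rw [hgraph]
      simp [hp]
    · intro hp
      obtain ⟨k, hk⟩ := Set.mem_iUnion.mp hp
      rw [hgraph] at hk
      exact hk.1
end
end

section
/- Let (X,d) and (Y,∂) be uniformly locally finite metric spaces, f : X → Y a coarse map, and S : ℓ²(X,H) → ℓ²(Y,H) an isometry such that there exists R ≥ 0 with ∂(y, f(x)) ≤ R whenever 𝟙_y S 𝟙_x ≠ 0. If f is coarse with control function: for all R₀ there is R₁ with d(x,x') ≤ R₀ implying ∂(f(x),f(x')) ≤ R₁, then for every finite-propagation operator T on ℓ²(X,H) with prop(T) ≤ R₀, the operator S T S* on ℓ²(Y,H) has propagation at most R₁ + 2R. -/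
noncomputable section
open scoped Classical

variable {H : Type*} [NormedAddCommGroup H] [InnerProductSpace ℂ H] [CompleteSpace H]

/-- `ℓ²(X, H)`, the Hilbert space of square-summable `H`-valued functions. -/
abbrev L2H (X : Type*) (H : Type*) [NormedAddCommGroup H]
    [InnerProductSpace ℂ H] := lp (fun _ : X => H) 2

/-- `𝟙_y S 𝟙_x ≠ 0` for an operator `S : ℓ²(X,H) → ℓ²(Y,H)`. -/
def blkNe {X Y : Type*} (S : L2H X H →L[ℂ] L2H Y H) (y : Y) (x : X) : Prop :=
  ∃ v : H, (S (lp.single 2 x v) : ∀ _ : Y, H) y ≠ 0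

/-!
Testing block support against vectors `lp.single y v` turns `blkNe S y x` into the non-vanishing
of some `⟪single y v, S (single x u)⟫`. Hence the block support of `S*` is the transpose of that of
`S`, and expanding `⟪single z w, A (B (single x v))⟫ = ⟪A* (single z w), B (single x v)⟫` as a sum
over the middle space shows that the block support of `A B` is contained in the composite of the
block supports. So `𝟙_{y'} S T S* 𝟙_y ≠ 0` yields `x, x'` with `∂(y, f x) ≤ R`, `d(x, x') ≤ R₀`
and `∂(f x', y') ≤ R`, and the triangle inequality finishes.
-/

section BlockSupport

variable {X Y Z : Type*}

omit [CompleteSpace H] in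
theorem blkNe_iff_exists_inner_ne_zero (S : L2H X H →L[ℂ] L2H Y H) (y : Y) (x : X) :
    blkNe S y x ↔ ∃ u v : H, inner ℂ (lp.single 2 y v) (S (lp.single 2 x u)) ≠ 0 := by
  simp only [lp.inner_single_left]
  constructor
  · rintro ⟨u, hu⟩
    exact ⟨u, _, inner_self_ne_zero.mpr hu⟩
  · rintro ⟨u, v, huv⟩
    refine ⟨u, fun h => huv ?_⟩
    rw [h, inner_zero_right]

theorem blkNe_adjoint_of_blkNe (S : L2H X H →L[ℂ] L2H Y H) {y : Y} {x : X} (h : blkNe S y x) :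
    blkNe (ContinuousLinearMap.adjoint S) x y := by
  rw [blkNe_iff_exists_inner_ne_zero] at h ⊢
  obtain ⟨u, v, huv⟩ := h
  refine ⟨v, u, fun h0 => huv ?_⟩
  rw [ContinuousLinearMap.adjoint_inner_right] at h0
  rw [← inner_conj_symm, h0, map_zero]

theorem blkNe_adjoint_iff (S : L2H X H →L[ℂ] L2H Y H) (y : Y) (x : X) :
    blkNe (ContinuousLinearMap.adjoint S) x y ↔ blkNe S y x := by
  refine ⟨fun h => ?_, blkNe_adjoint_of_blkNe S⟩
  simpa only [ContinuousLinearMap.adjoint_adjoint] using blkNe_adjoint_of_blkNe _ h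

theorem exists_blkNe_of_blkNe_comp (A : L2H Y H →L[ℂ] L2H Z H) (B : L2H X H →L[ℂ] L2H Y H)
    {z : Z} {x : X} (h : blkNe (A.comp B) z x) : ∃ y, blkNe A z y ∧ blkNe B y x := by
  obtain ⟨u, w, huw⟩ := (blkNe_iff_exists_inner_ne_zero _ z x).mp h
  rw [ContinuousLinearMap.comp_apply, ← ContinuousLinearMap.adjoint_inner_left,
    lp.inner_eq_tsum] at huw
  obtain ⟨y, hy⟩ : ∃ y, inner ℂ ((ContinuousLinearMap.adjoint A (lp.single 2 z w) : ∀ _ : Y, H) y)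
      ((B (lp.single 2 x u) : ∀ _ : Y, H) y) ≠ 0 := by
    by_contra! h0
    simp [h0] at huw
  refine ⟨y, (blkNe_adjoint_iff A z y).mp ⟨w, fun h0 => hy ?_⟩, ⟨u, fun h0 => hy ?_⟩⟩
  · rw [h0, inner_zero_left]
  · rw [h0, inner_zero_right]

end BlockSupport

theorem stmt15_general {X Y : Type*} [MetricSpace X] [MetricSpace Y]
    (f : X → Y)
    (S : L2H X H →L[ℂ] L2H Y H)
    (R : ℝ)
    (hcover : ∀ (x : X) (y : Y), blkNe S y x → dist y (f x) ≤ R)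
    (R₀ R₁ : ℝ) (hctrl : ∀ x x' : X, dist x x' ≤ R₀ → dist (f x) (f x') ≤ R₁)
    (T : L2H X H →L[ℂ] L2H X H)
    (hT : ∀ x x' : X, blkNe T x' x → dist x x' ≤ R₀) :
    ∀ y y' : Y,
      blkNe (S.comp (T.comp (ContinuousLinearMap.adjoint S))) y' y →
        dist y y' ≤ R₁ + 2 * R := by
  intro y y' h
  obtain ⟨x', hSx', hTS⟩ := exists_blkNe_of_blkNe_comp _ _ h
  obtain ⟨x, hTx, hSx⟩ := exists_blkNe_of_blkNe_comp _ _ hTS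
  rw [blkNe_adjoint_iff] at hSx
  calc dist y y' ≤ dist y (f x) + dist (f x) (f x') + dist (f x') y' := dist_triangle4 _ _ _ _
    _ ≤ R + R₁ + R := by
        gcongr
        · exact hcover x y hSx
        · exact hctrl x x' (hT x x' hTx)
        · exact dist_comm y' _ ▸ hcover x' y' hSx'
    _ = R₁ + 2 * R := by ring

/-- If the isometry `S` covers the coarse map `f` within distance `R`, and `f`
sends pairs at distance `≤ R₀` to pairs at distance `≤ R₁`, then for every
operator `T` of propagation at most `R₀`, the operator `S T S*` has
propagation at most `R₁ + 2R`. -/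
theorem stmt15 {X Y : Type*} [MetricSpace X] [MetricSpace Y]
    (hX : UniformlyLocallyFinite X) (hY : UniformlyLocallyFinite Y)
    (f : X → Y) (hf : IsCoarse f)
    (S : L2H X H →L[ℂ] L2H Y H) (hS : Isometry S)
    (R : ℝ) (hR : 0 ≤ R)
    (hcover : ∀ (x : X) (y : Y), blkNe S y x → dist y (f x) ≤ R)
    (R₀ R₁ : ℝ) (hctrl : ∀ x x' : X, dist x x' ≤ R₀ → dist (f x) (f x') ≤ R₁)
    (T : L2H X H →L[ℂ] L2H X H)
    (hT : ∀ x x' : X, blkNe T x' x → dist x x' ≤ R₀) :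
    ∀ y y' : Y,
      blkNe (S.comp (T.comp (ContinuousLinearMap.adjoint S))) y' y →
        dist y y' ≤ R₁ + 2 * R :=
  stmt15_general f S R hcover R₀ R₁ hctrl T hT
end
end

section
/- Every uniformly finite-to-one coarse map f : X → Y between uniformly locally finite metric spaces factors, up to closeness, through an injective coarse map into a doubling of Y: if n = sup_y |f⁻¹(y)|, then there exists an injective uniformly finite-to-one coarse map f̃ : X → Y^(n) = Y × {1,…,n} (with metric d_n((y,i),(y',j)) = ∂(y,y') + |i−j|) that is close to j∘f, where j(y) = (y,1). -/
noncomputable section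
open scoped Classical

/-- Every uniformly finite-to-one coarse map `f : X → Y` is, up to closeness,
an injective coarse map into the `n`-th doubling of `Y`, where
`n = sup_y |f⁻¹(y)|`. The doubling is represented by a metric space `Z`
identified with `Y × Fin n` carrying the metric
`d((y,i),(y',j)) = ∂(y,y') + |i − j|`. -/
theorem stmt16 {X Y : Type*} [MetricSpace X] [MetricSpace Y]
    (hX : UniformlyLocallyFinite X) (hY : UniformlyLocallyFinite Y)
    (f : X → Y) (hf : IsCoarse f)
    (n : ℕ) (hn : 1 ≤ n)
    (hfib : ∀ y : Y, (f ⁻¹' {y}).Finite ∧ (f ⁻¹' {y}).ncard ≤ n)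
    (hsup : ∃ y : Y, (f ⁻¹' {y}).ncard = n)
    {Z : Type*} [MetricSpace Z] (e : Z ≃ Y × Fin n)
    (hdist : ∀ z w : Z,
      dist z w = dist (e z).1 (e w).1 +
        |(((e z).2 : ℕ) : ℝ) - (((e w).2 : ℕ) : ℝ)|) :
    ∃ ft : X → Z,
      Function.Injective ft ∧ IsCoarse ft ∧ UniformlyFiniteToOne ft ∧
      Close ft (fun x : X => e.symm (f x, ⟨0, hn⟩)) := by
  -- choose an injective labelling of each fiber
  have hemb : ∀ y : Y, ∃ g : (f ⁻¹' {y}) → Fin n, Function.Injective g := by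
    intro y
    haveI := (hfib y).1.fintype
    have hcard : Fintype.card (f ⁻¹' {y}) ≤ n := by
      have h1 : Fintype.card (f ⁻¹' {y}) = (f ⁻¹' {y}).ncard := by
        rw [← Nat.card_coe_set_eq, Nat.card_eq_fintype_card]
      rw [h1]; exact (hfib y).2
    refine ⟨fun s => Fin.castLE hcard ((Fintype.equivFin _) s), ?_⟩
    intro a b hab
    exact (Fintype.equivFin _).injective (Fin.castLE_injective hcard hab)
  choose emb hembinj using hemb
  set lab : X → Fin n := fun x => emb (f x) ⟨x, rfl⟩ with hlab
  have lab_eq : ∀ (x : X) (y : Y) (hx : f x = y), lab x = emb y ⟨x, hx⟩ := by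
    intro x y hx; subst hx; rfl
  set ft : X → Z := fun x => e.symm (f x, lab x) with hft
  have heft : ∀ x, e (ft x) = (f x, lab x) := by
    intro x; simp [hft]
  refine ⟨ft, ?_, ?_, ?_, ?_⟩
  · -- injective
    intro x x' h
    have h2 : (f x, lab x) = (f x', lab x') := by
      rw [← heft, ← heft, h]
    have hfe : f x = f x' := congrArg Prod.fst h2
    have hl : lab x = lab x' := congrArg Prod.snd h2
    have hx' : f x' = f x := hfe.symm
    rw [lab_eq x (f x) rfl, lab_eq x' (f x) hx'] at hl
    have := hembinj (f x) hl
    exact congrArg Subtype.val this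
  · -- coarse
    intro R
    obtain ⟨S, hS⟩ := hf R
    refine ⟨S + n, fun x x' hxx => ?_⟩
    rw [hdist, heft, heft]
    have h1 : dist (f x) (f x') ≤ S := hS x x' hxx
    have h2 : |((lab x : ℕ) : ℝ) - ((lab x' : ℕ) : ℝ)| ≤ n := by
      have ha : (0:ℝ) ≤ ((lab x : ℕ):ℝ) := Nat.cast_nonneg _
      have hb : (0:ℝ) ≤ ((lab x' : ℕ):ℝ) := Nat.cast_nonneg _
      have ha' : ((lab x : ℕ):ℝ) ≤ n := by exact_mod_cast (lab x).2.le
      have hb' : ((lab x' : ℕ):ℝ) ≤ n := by exact_mod_cast (lab x').2.le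
      rw [abs_le]; constructor <;> linarith
    linarith
  · -- uniformly finite-to-one
    refine ⟨n, fun z => ?_⟩
    have hsub : ft ⁻¹' {z} ⊆ f ⁻¹' {(e z).1} := by
      intro x hx
      have : ft x = z := hx
      have : (f x, lab x) = e z := by rw [← heft, this]
      simpa [Set.mem_preimage] using congrArg Prod.fst this
    have hfin : (ft ⁻¹' {z}).Finite := (hfib (e z).1).1.subset hsub
    exact ⟨hfin, le_trans (Set.ncard_le_ncard hsub (hfib (e z).1).1) (hfib (e z).1).2⟩
  · -- close
    refine ⟨n, fun x => ?_⟩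
    rw [hdist]
    simp only [heft, Equiv.apply_symm_apply, dist_self, zero_add]
    rw [Fin.val_mk, Nat.cast_zero, sub_zero, abs_of_nonneg (Nat.cast_nonneg _)]
    exact_mod_cast (lab x).2.le
end
end
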